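/- For any a ≥ 2, Λ(a) = Λ(⌈a/2⌉) + Λ(⌊a/2⌋) + ⌊a/2⌋. -/

import Mathlib

/-- `U` induces a disjoint union of chains such that any two elements belonging to different
chains are incomparable; equivalently, comparability restricted to `U` is transitive
(so the comparability graph induced on `U` is a vertex-disjoint union of cliques). -/
def IsChainUnion {α : Type*} [PartialOrder α] (U : Finset α) : Prop :=
  ∀ x ∈ U, ∀ y ∈ U, ∀ z ∈ U,
    (x ≤ y ∨ y ≤ x) → (y ≤ z ∨ z ≤ y) → (x ≤ z ∨ z ≤ x)

/-- `ao α`: the maximum cardinality of a subset of the finite poset `α` that is a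
disjoint union of chains with elements of different chains incomparable. -/
noncomputable def ao (α : Type*) [Fintype α] [PartialOrder α] : ℕ :=
  sSup {m | ∃ U : Finset α, IsChainUnion U ∧ U.card = m}

/-- The height of a finite poset: the maximum size of a chain. -/
noncomputable def heightP (α : Type*) [Fintype α] [PartialOrder α] : ℕ :=
  sSup {m | ∃ C : Finset α, IsChain (· ≤ ·) (↑C : Set α) ∧ C.card = m}

/-- The width of a finite poset: the maximum size of an antichain. -/
noncomputable def widthP (α : Type*) [Fintype α] [PartialOrder α] : ℕ :=
  sSup {m | ∃ A : Finset α, IsAntichain (· ≤ ·) (↑A : Set α) ∧ A.card = m}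

/-- The cover graph of a poset: `x` and `y` are adjacent iff one covers the other. -/
def coverGraph (α : Type*) [PartialOrder α] : SimpleGraph α where
  Adj x y := x ⋖ y ∨ y ⋖ x
  symm := ⟨fun x y h => h.symm⟩
  loopless := ⟨fun x h => by rcases h with h | h <;> exact absurd h.lt (lt_irrefl x)⟩

/-- A poset is acyclic if its cover graph has no cycles. -/
def AcyclicPoset (α : Type*) [PartialOrder α] : Prop := (coverGraph α).IsAcyclic

/-- A poset is connected if its cover graph is connected. -/
def ConnectedPoset (α : Type*) [PartialOrder α] : Prop := (coverGraph α).Connected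

/-- A poset is `N`-free if there are no `p1, p2, p3, p4` with `p1 > p3`, `p1 > p4`, `p2 > p4`,
`p1 ∦ p2`, `p2 ∦ p3`, `p3 ∦ p4`. -/
def NFree (α : Type*) [PartialOrder α] : Prop :=
  ¬ ∃ p1 p2 p3 p4 : α, p3 < p1 ∧ p4 < p1 ∧ p4 < p2 ∧
      ¬(p1 ≤ p2 ∨ p2 ≤ p1) ∧ ¬(p2 ≤ p3 ∨ p3 ≤ p2) ∧ ¬(p3 ≤ p4 ∨ p4 ≤ p3)

/-- A poset is `V`-free if there are no `p1 < p2`, `p1 < p3` with `p2` incomparable to `p3`. -/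
def VFree (α : Type*) [PartialOrder α] : Prop :=
  ¬ ∃ p1 p2 p3 : α, p1 < p2 ∧ p1 < p3 ∧ ¬(p2 ≤ p3 ∨ p3 ≤ p2)

/-- `ao` of the family `T_n` of all acyclic posets on `n` elements:
the minimum of `ao P` over acyclic posets `P` of size `n`. -/
noncomputable def aoT (n : ℕ) : ℕ :=
  sInf {m | ∃ P : PartialOrder (Fin n),
    @AcyclicPoset (Fin n) P ∧ @ao (Fin n) (Fin.fintype n) P = m}

/-- `Λ(a, h)`: the maximum cardinality of a `V`-free poset `P` with `ao P = a` and
height at most `h`. -/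
noncomputable def Lam (a h : ℕ) : ℕ :=
  sSup {n | ∃ P : PartialOrder (Fin n), @VFree (Fin n) P ∧
    @ao (Fin n) (Fin.fintype n) P = a ∧ @heightP (Fin n) (Fin.fintype n) P ≤ h}

/-- `Λ(a) = Λ(a, a)`. -/
noncomputable def Lambda (a : ℕ) : ℕ := Lam a a

/-- `X(a)`: the maximum cardinality of an acyclic and `N`-free poset `P` with `ao P = a`. -/
noncomputable def Xmax (a : ℕ) : ℕ :=
  sSup {n | ∃ P : PartialOrder (Fin n), @AcyclicPoset (Fin n) P ∧
    @NFree (Fin n) P ∧ @ao (Fin n) (Fin.fintype n) P = a}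


/-!
Let `L` be given by `L 0 = 0`, `L 1 = 1` and the recursion of the theorem; we show `Λ = L`, using
that `L m + L n + min m n ≤ L (m + n)` and hence that `L a - a` is monotone.

Upper bound: in a `V`-free poset the elements above any element form a chain. Hence for a maximal
element `r` of a subset `S`, the down-set `A` of `r` in `S` is incomparable to the rest `B` of `S`,
so `ao A + ao B ≤ ao S`, while removing `r` from `A` lowers its height. Induction over subsets then
yields `|S| + ao S ≤ L (ao S) + h S`, and `h S ≤ ao S`.

Lower bound: stacking a chain of `⌊a/2⌋` new top elements on the disjoint union of extremal
posets for `⌈a/2⌉` and `⌊a/2⌋` gives a `V`-free poset with `ao = a`, height `a` and `L a`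
elements.
-/

def lambdaRec : ℕ → ℕ
  | 0 => 0
  | 1 => 1
  | n + 2 => lambdaRec ((n + 3) / 2) + lambdaRec ((n + 2) / 2) + (n + 2) / 2

theorem lambdaRec_half (a : ℕ) :
    lambdaRec a = lambdaRec ((a + 1) / 2) + lambdaRec (a / 2) + a / 2 := by
  match a with
  | 0 | 1 => simp [lambdaRec]
  | n + 2 => rw [lambdaRec]

theorem lambdaRec_add_add_min_le (m n : ℕ) :
    lambdaRec m + lambdaRec n + min m n ≤ lambdaRec (m + n) := by
  induction hs : m + n using Nat.strong_induction_on generalizing m n with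
  | _ s ih =>
  obtain rfl | hm := Nat.eq_zero_or_pos m
  · simp [lambdaRec, ← hs]
  obtain rfl | hn := Nat.eq_zero_or_pos n
  · simp [lambdaRec, ← hs]
  -- The halves of `m + n` are `⌈m/2⌉ + ⌊n/2⌋` and `⌊m/2⌋ + ⌈n/2⌉`, in some order.
  have h₁ := ih ((m + 1) / 2 + n / 2) (by omega) _ _ rfl
  have h₂ := ih (m / 2 + (n + 1) / 2) (by omega) _ _ rfl
  have := lambdaRec_half m
  have := lambdaRec_half n
  have := lambdaRec_half s
  obtain ⟨e₁, e₂⟩ | ⟨e₁, e₂⟩ :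
      ((m + 1) / 2 + n / 2 = (s + 1) / 2 ∧ m / 2 + (n + 1) / 2 = s / 2) ∨
      ((m + 1) / 2 + n / 2 = s / 2 ∧ m / 2 + (n + 1) / 2 = (s + 1) / 2) := by omega
  all_goals rw [e₁] at h₁; rw [e₂] at h₂; omega

theorem self_le_lambdaRec (a : ℕ) : a ≤ lambdaRec a := by
  induction a with
  | zero => exact Nat.zero_le _
  | succ a ih =>
    have := lambdaRec_add_add_min_le a 1
    simp only [lambdaRec] at this
    omega

theorem lambdaRec_add_le_lambdaRec_add {a b : ℕ} (hab : a ≤ b) :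
    lambdaRec a + b ≤ lambdaRec b + a := by
  have key := lambdaRec_add_add_min_le a (b - a)
  rw [Nat.add_sub_cancel' hab] at key
  have := self_le_lambdaRec (b - a)
  omega

open Finset

/-- `ao` and `heightP` are, by definition, instances of `maxCard`. -/
noncomputable def maxCard {α : Type*} (p : Finset α → Prop) : ℕ :=
  sSup {m | ∃ U, p U ∧ U.card = m}

section MaxCard

variable {α : Type*} [Fintype α] {p q : Finset α → Prop}

theorem bddAbove_card_setOf (p : Finset α → Prop) : BddAbove {m | ∃ U, p U ∧ U.card = m} := by
  refine ⟨Fintype.card α, ?_⟩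
  rintro _ ⟨U, -, rfl⟩
  exact U.card_le_univ

theorem card_le_maxCard {U : Finset α} (hU : p U) : U.card ≤ maxCard p :=
  le_csSup (bddAbove_card_setOf p) ⟨U, hU, rfl⟩

theorem exists_card_eq_maxCard (h₀ : p ∅) : ∃ U, p U ∧ U.card = maxCard p :=
  Nat.sSup_mem (s := {m | ∃ U, p U ∧ U.card = m}) ⟨0, ∅, h₀, rfl⟩ (bddAbove_card_setOf p)

theorem maxCard_mono (h₀ : p ∅) (hpq : ∀ U, p U → q U) : maxCard p ≤ maxCard q := by
  obtain ⟨U, hU, hcard⟩ := exists_card_eq_maxCard h₀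
  exact hcard ▸ card_le_maxCard (hpq U hU)

theorem maxCard_le_card (h₀ : p ∅) : maxCard p ≤ Fintype.card α := by
  obtain ⟨U, -, hcard⟩ := exists_card_eq_maxCard h₀
  exact hcard ▸ U.card_le_univ

end MaxCard

section ChainUnion

variable {α β : Type*} [PartialOrder α] [PartialOrder β] {U V : Finset α}

theorem isChainUnion_empty : IsChainUnion (∅ : Finset α) := by
  simp [IsChainUnion]

theorem IsChain.isChainUnion (hU : IsChain (· ≤ ·) (U : Set α)) : IsChainUnion U := by
  intro x hx _ _ z hz _ _
  obtain rfl | hne := eq_or_ne x z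
  · exact Or.inl le_rfl
  · exact hU hx hz hne

theorem IsChainUnion.union [DecidableEq α] (hU : IsChainUnion U) (hV : IsChainUnion V)
    (hUV : ∀ x ∈ U, ∀ y ∈ V, ¬(x ≤ y ∨ y ≤ x)) : IsChainUnion (U ∪ V) := by
  intro x hx y hy z hz hxy hyz
  rw [mem_union] at hx hy hz
  rcases hy with hy | hy
  · have hx : x ∈ U := hx.resolve_right fun hx => hUV y hy x hx hxy.symm
    have hz : z ∈ U := hz.resolve_right fun hz => hUV y hy z hz hyz
    exact hU x hx y hy z hz hxy hyz
  · have hx : x ∈ V := hx.resolve_left fun hx => hUV x hx y hy hxy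
    have hz : z ∈ V := hz.resolve_left fun hz => hUV z hz y hy hyz.symm
    exact hV x hx y hy z hz hxy hyz

theorem IsChainUnion.comap (f : α ↪o β) {W : Finset β} (hW : IsChainUnion W)
    (hUW : ∀ x ∈ U, f x ∈ W) : IsChainUnion U := by
  intro x hx y hy z hz hxy hyz
  simpa using hW _ (hUW x hx) _ (hUW y hy) _ (hUW z hz) (by simpa using hxy) (by simpa using hyz)

theorem IsChainUnion.map (f : α ↪o β) (hU : IsChainUnion U) :
    IsChainUnion (U.map f.toEmbedding) := by
  intro x hx y hy z hz hxy hyz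
  simp only [mem_map] at hx hy hz
  obtain ⟨x, hx, rfl⟩ := hx
  obtain ⟨y, hy, rfl⟩ := hy
  obtain ⟨z, hz, rfl⟩ := hz
  simpa using hU x hx y hy z hz (by simpa using hxy) (by simpa using hyz)

end ChainUnion

section Global

variable {α β : Type*} [Fintype α] [PartialOrder α] [Fintype β] [PartialOrder β]

theorem card_le_ao {U : Finset α} (hU : IsChainUnion U) : U.card ≤ ao α :=
  card_le_maxCard hU

theorem exists_isChainUnion_card_eq_ao : ∃ U : Finset α, IsChainUnion U ∧ U.card = ao α :=
  exists_card_eq_maxCard isChainUnion_empty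

theorem card_le_heightP {C : Finset α} (hC : IsChain (· ≤ ·) (C : Set α)) :
    C.card ≤ heightP α :=
  card_le_maxCard (p := fun C : Finset α => IsChain (· ≤ ·) (C : Set α)) hC

theorem exists_isChain_card_eq_heightP :
    ∃ C : Finset α, IsChain (· ≤ ·) (C : Set α) ∧ C.card = heightP α :=
  exists_card_eq_maxCard (p := fun C : Finset α => IsChain (· ≤ ·) (C : Set α)) (by simp)

theorem ao_le_card : ao α ≤ Fintype.card α :=
  maxCard_le_card isChainUnion_empty

theorem heightP_le_card : heightP α ≤ Fintype.card α :=
  maxCard_le_card (p := fun C : Finset α => IsChain (· ≤ ·) (C : Set α)) (by simp)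

theorem ao_le_of_orderEmbedding (f : α ↪o β) : ao α ≤ ao β := by
  obtain ⟨U, hU, hcard⟩ := exists_isChainUnion_card_eq_ao (α := α)
  rw [← hcard, ← card_map f.toEmbedding]
  exact card_le_ao (hU.map f)

theorem heightP_le_of_orderEmbedding (f : α ↪o β) : heightP α ≤ heightP β := by
  obtain ⟨C, hC, hcard⟩ := exists_isChain_card_eq_heightP (α := α)
  rw [← hcard, ← card_map f.toEmbedding]
  exact card_le_heightP (by simpa using hC.image f)

end Global

section Relative

variable {α : Type*} [PartialOrder α]

noncomputable def aoOn (S : Finset α) : ℕ := maxCard fun U => U ⊆ S ∧ IsChainUnion U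

noncomputable def heightOn (S : Finset α) : ℕ :=
  maxCard fun C => C ⊆ S ∧ IsChain (· ≤ ·) (C : Set α)

variable [Fintype α] {S T U : Finset α}

theorem card_le_aoOn (hUS : U ⊆ S) (hU : IsChainUnion U) : U.card ≤ aoOn S :=
  card_le_maxCard (p := fun U => U ⊆ S ∧ IsChainUnion U) ⟨hUS, hU⟩

theorem exists_isChainUnion_card_eq_aoOn (S : Finset α) :
    ∃ U ⊆ S, IsChainUnion U ∧ U.card = aoOn S := by
  obtain ⟨U, ⟨hUS, hU⟩, hcard⟩ := exists_card_eq_maxCard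
    (p := fun U => U ⊆ S ∧ IsChainUnion U) ⟨empty_subset S, isChainUnion_empty⟩
  exact ⟨U, hUS, hU, hcard⟩

theorem card_le_heightOn (hCS : U ⊆ S) (hC : IsChain (· ≤ ·) (U : Set α)) :
    U.card ≤ heightOn S :=
  card_le_maxCard (p := fun C => C ⊆ S ∧ IsChain (· ≤ ·) (C : Set α)) ⟨hCS, hC⟩

theorem exists_isChain_card_eq_heightOn (S : Finset α) :
    ∃ C ⊆ S, IsChain (· ≤ ·) (C : Set α) ∧ C.card = heightOn S := by
  obtain ⟨C, ⟨hCS, hC⟩, hcard⟩ := exists_card_eq_maxCard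
    (p := fun C => C ⊆ S ∧ IsChain (· ≤ ·) (C : Set α)) ⟨empty_subset S, by simp⟩
  exact ⟨C, hCS, hC, hcard⟩

theorem aoOn_mono (hST : S ⊆ T) : aoOn S ≤ aoOn T :=
  maxCard_mono ⟨empty_subset S, isChainUnion_empty⟩ fun _ ⟨hUS, hU⟩ => ⟨hUS.trans hST, hU⟩

theorem heightOn_mono (hST : S ⊆ T) : heightOn S ≤ heightOn T :=
  maxCard_mono ⟨empty_subset S, by simp⟩ fun _ ⟨hCS, hC⟩ => ⟨hCS.trans hST, hC⟩

theorem heightOn_le_aoOn (S : Finset α) : heightOn S ≤ aoOn S :=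
  maxCard_mono ⟨empty_subset S, by simp⟩ fun _ ⟨hCS, hC⟩ => ⟨hCS, hC.isChainUnion⟩

theorem aoOn_univ : aoOn (univ : Finset α) = ao α := by
  simp only [aoOn, subset_univ, true_and]
  rfl

theorem aoOn_add_aoOn_le [DecidableEq α] {A B : Finset α} (hA : A ⊆ S) (hB : B ⊆ S)
    (hAB : ∀ x ∈ A, ∀ y ∈ B, ¬(x ≤ y ∨ y ≤ x)) : aoOn A + aoOn B ≤ aoOn S := by
  obtain ⟨U, hUA, hU, hUcard⟩ := exists_isChainUnion_card_eq_aoOn A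
  obtain ⟨V, hVB, hV, hVcard⟩ := exists_isChainUnion_card_eq_aoOn B
  have hUV : ∀ x ∈ U, ∀ y ∈ V, ¬(x ≤ y ∨ y ≤ x) := fun x hx y hy => hAB x (hUA hx) y (hVB hy)
  have hdisj : Disjoint U V := disjoint_left.2 fun x hxU hxV => hUV x hxU x hxV (Or.inl le_rfl)
  rw [← hUcard, ← hVcard, ← card_union_of_disjoint hdisj]
  exact card_le_aoOn (union_subset (hUA.trans hA) (hVB.trans hB)) (hU.union hV hUV)

theorem heightOn_erase_add_one_le [DecidableEq α] {r : α} (hr : r ∈ S) (htop : ∀ x ∈ S, x ≤ r) :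
    heightOn (S.erase r) + 1 ≤ heightOn S := by
  obtain ⟨C, hCS, hC, hcard⟩ := exists_isChain_card_eq_heightOn (S.erase r)
  have hrC : r ∉ C := fun h => notMem_erase r S (hCS h)
  have hchain : IsChain (· ≤ ·) (insert r C : Set α) :=
    hC.insert fun x hx _ => Or.inr (htop x (mem_of_mem_erase (hCS hx)))
  rw [← hcard, ← card_insert_of_notMem hrC]
  exact card_le_heightOn (insert_subset hr (hCS.trans (erase_subset r S))) (by simpa using hchain)

end Relative

section VFree

variable {α β : Type*} [PartialOrder α] [PartialOrder β]

theorem vFree_iff :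
    VFree α ↔ ∀ ⦃x y z : α⦄, x ≤ y → x ≤ z → y ≤ z ∨ z ≤ y := by
  refine ⟨fun hV x y z hxy hxz => ?_, fun h ⟨x, y, z, hxy, hxz, hyz⟩ => hyz (h hxy.le hxz.le)⟩
  obtain rfl | hxy := hxy.eq_or_lt
  · exact Or.inl hxz
  obtain rfl | hxz := hxz.eq_or_lt
  · exact Or.inr hxy.le
  by_contra hyz
  exact hV ⟨x, y, z, hxy, hxz, hyz⟩

theorem VFree.comap (f : α ↪o β) (hV : VFree β) : VFree α :=
  vFree_iff.2 fun _ _ _ hxy hxz => by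
    simpa using vFree_iff.1 hV (f.monotone hxy) (f.monotone hxz)

theorem VFree.sum (hα : VFree α) (hβ : VFree β) : VFree (α ⊕ β) := by
  rw [vFree_iff] at hα hβ ⊢
  rintro (a | a) (b | b) (c | c) hab hac <;> simp_all
  exacts [hα hab hac, hβ hab hac]

theorem VFree.withTop (hV : VFree α) : VFree (WithTop α) := by
  rw [vFree_iff] at hV ⊢
  intro x y z hxy hxz
  induction y using WithTop.recTopCoe with
  | top => exact Or.inr le_top
  | coe b =>
  induction z using WithTop.recTopCoe with
  | top => exact Or.inl le_top
  | coe c =>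
  induction x using WithTop.recTopCoe with
  | top => simp at hxy
  | coe a => simpa using hV (WithTop.coe_le_coe.1 hxy) (WithTop.coe_le_coe.1 hxz)

theorem VFree.not_comparable_of_maximal (hV : VFree α) {S : Finset α} {r x y : α}
    (hr : Maximal (· ∈ S) r) (hy : y ∈ S) (hxr : x ≤ r) (hyr : ¬y ≤ r) :
    ¬(x ≤ y ∨ y ≤ x) := by
  rintro (hxy | hyx)
  · rcases vFree_iff.1 hV hxy hxr with h | h
    · exact hyr h
    · exact hyr (hr.2 hy h)
  · exact hyr (hyx.trans hxr)

end VFree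

section UpperBound

variable {α : Type*} [PartialOrder α] [Fintype α]

theorem card_add_aoOn_le_of_erase [DecidableEq α] {S : Finset α} {r : α} (hr : r ∈ S)
    (htop : ∀ x ∈ S, x ≤ r)
    (h : (S.erase r).card + aoOn (S.erase r) ≤
      lambdaRec (aoOn (S.erase r)) + heightOn (S.erase r)) :
    S.card + aoOn S ≤ lambdaRec (aoOn S) + heightOn S := by
  have := card_erase_add_one hr
  have := heightOn_erase_add_one_le hr htop
  have := lambdaRec_add_le_lambdaRec_add (aoOn_mono (erase_subset r S))
  omega

theorem VFree.card_add_aoOn_le (hV : VFree α) (S : Finset α) :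
    S.card + aoOn S ≤ lambdaRec (aoOn S) + heightOn S := by
  classical
  induction S using Finset.strongInduction with
  | _ S ih =>
  obtain rfl | ⟨x, hx⟩ := S.eq_empty_or_nonempty
  · simpa using (self_le_lambdaRec _).trans (Nat.le_add_right _ _)
  obtain ⟨r, -, hr⟩ := S.exists_le_maximal hx
  set A := S.filter (· ≤ r)
  set B := S.filter (¬· ≤ r)
  have hAS : A ⊆ S := filter_subset _ S
  have hBS : B ⊆ S := filter_subset _ S
  have hrA : r ∈ A := mem_filter.2 ⟨hr.1, le_rfl⟩
  have hA := card_add_aoOn_le_of_erase hrA (fun x hx => (mem_filter.1 hx).2)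
    (ih _ ((erase_ssubset hrA).trans_subset hAS))
  have hB := ih B (filter_ssubset.2 ⟨r, hr.1, not_not.2 le_rfl⟩)
  have hAB : aoOn A + aoOn B ≤ aoOn S := aoOn_add_aoOn_le hAS hBS fun x hx y hy =>
    hV.not_comparable_of_maximal hr (mem_filter.1 hy).1 (mem_filter.1 hx).2 (mem_filter.1 hy).2
  have : A.card + B.card = S.card := card_filter_add_card_filter_not _
  -- The loss `min (ao A) (ao B)` in superadditivity is absorbed by `h A ≤ ao A`, `h B ≤ ao B`.
  have := heightOn_mono hAS
  have := heightOn_mono hBS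
  have := heightOn_le_aoOn A
  have := heightOn_le_aoOn B
  have := lambdaRec_add_add_min_le (aoOn A) (aoOn B)
  have := lambdaRec_add_le_lambdaRec_add hAB
  omega

theorem VFree.card_le_lambdaRec_ao (hV : VFree α) : Fintype.card α ≤ lambdaRec (ao α) := by
  have := hV.card_add_aoOn_le univ
  have := heightOn_le_aoOn (univ : Finset α)
  rw [card_univ, aoOn_univ] at *
  omega

end UpperBound

section Sum

variable {α β : Type*} [Fintype α] [PartialOrder α] [Fintype β] [PartialOrder β]

def OrderEmbedding.sumInl : α ↪o α ⊕ β := .ofMapLEIff Sum.inl fun _ _ => Sum.inl_le_inl_iff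

def OrderEmbedding.sumInr : β ↪o α ⊕ β := .ofMapLEIff Sum.inr fun _ _ => Sum.inr_le_inr_iff

theorem ao_sum : ao (α ⊕ β) = ao α + ao β := by
  apply le_antisymm
  · obtain ⟨W, hW, hcard⟩ := exists_isChainUnion_card_eq_ao (α := α ⊕ β)
    rw [← hcard, ← card_toLeft_add_card_toRight]
    exact add_le_add (card_le_ao (hW.comap .sumInl fun _ => mem_toLeft.1))
      (card_le_ao (hW.comap .sumInr fun _ => mem_toRight.1))
  · obtain ⟨U, hU, hUcard⟩ := exists_isChainUnion_card_eq_ao (α := α)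
    obtain ⟨V, hV, hVcard⟩ := exists_isChainUnion_card_eq_ao (α := β)
    rw [← hUcard, ← hVcard, ← card_disjSum]
    apply card_le_ao
    rintro (a | a) ha (b | b) hb (c | c) hc hab hbc <;> simp_all
    exacts [hU a ha b hb c hc hab hbc, hV a ha b hb c hc hab hbc]

theorem heightP_sum_le : heightP (α ⊕ β) ≤ max (heightP α) (heightP β) := by
  obtain ⟨C, hC, hcard⟩ := exists_isChain_card_eq_heightP (α := α ⊕ β)
  have hL : C.toLeft.card ≤ heightP α :=
    card_le_heightP ((hC.preimage_relEmbedding OrderEmbedding.sumInl).mono fun _ => mem_toLeft.1)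
  have hR : C.toRight.card ≤ heightP β :=
    card_le_heightP ((hC.preimage_relEmbedding OrderEmbedding.sumInr).mono fun _ => mem_toRight.1)
  have hLR : C.toLeft = ∅ ∨ C.toRight = ∅ := by
    by_contra! h
    obtain ⟨⟨a, ha⟩, ⟨b, hb⟩⟩ := h
    simpa using hC (mem_toLeft.1 ha) (mem_toRight.1 hb) (by simp)
  rw [← hcard, ← card_toLeft_add_card_toRight]
  rcases hLR with h | h <;> rw [h, card_empty] <;> omega

end Sum

section WithTop

variable {α : Type*} [Fintype α] [PartialOrder α]

theorem heightP_withTop_le : heightP (WithTop α) ≤ heightP α + 1 := by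
  classical
  obtain ⟨C, hC, hcard⟩ := exists_isChain_card_eq_heightP (α := WithTop α)
  have hchain : IsChain (· ≤ ·) (C.eraseNone : Set α) :=
    (hC.preimage_relEmbedding WithTop.coeOrderHom).mono fun _ => mem_eraseNone.1
  have hcard_le : C.card ≤ C.eraseNone.card + 1 := by
    by_cases htop : (⊤ : WithTop α) ∈ C
    · exact (card_eraseNone_of_mem htop).symm ▸ le_tsub_add
    · exact (card_eraseNone_of_not_mem htop).symm ▸ Nat.le_succ _
  exact hcard ▸ hcard_le.trans (Nat.add_le_add_right (card_le_heightP hchain) 1)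

theorem ao_withTop_le : ao (WithTop α) ≤ max (ao α) (heightP (WithTop α)) := by
  obtain ⟨W, hW, hcard⟩ := exists_isChainUnion_card_eq_ao (α := WithTop α)
  rw [← hcard]
  by_cases htop : (⊤ : WithTop α) ∈ W
  · have hchain : IsChain (· ≤ ·) (W : Set (WithTop α)) := fun x hx y hy _ =>
      hW x hx ⊤ htop y hy (Or.inl le_top) (Or.inr le_top)
    exact le_max_of_le_right (card_le_heightP hchain)
  · exact (card_eraseNone_of_not_mem htop).ge.trans <| le_max_of_le_left <|
      card_le_ao (hW.comap WithTop.coeOrderHom fun _ => mem_eraseNone.1)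

end WithTop

def Realizable (a h n : ℕ) : Prop :=
  ∃ (α : Type) (_ : Fintype α) (_ : PartialOrder α),
    VFree α ∧ ao α = a ∧ heightP α ≤ h ∧ Fintype.card α = n

namespace Realizable

variable {a a₁ a₂ h h₁ h₂ n n₁ n₂ : ℕ}

theorem zero : Realizable 0 0 0 :=
  ⟨Empty, inferInstance, inferInstance, fun ⟨x, _⟩ => x.elim,
    Nat.le_zero.1 (ao_le_card.trans_eq Fintype.card_empty),
    heightP_le_card.trans_eq Fintype.card_empty, Fintype.card_empty⟩

theorem one : Realizable 1 1 1 := by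
  refine ⟨Unit, inferInstance, inferInstance,
    fun ⟨x, y, _, hxy, _⟩ => hxy.ne (Subsingleton.elim _ _),
    le_antisymm ao_le_card ?_, heightP_le_card, Fintype.card_unit⟩
  simpa using card_le_ao (U := (univ : Finset Unit))
    fun x _ _ _ z _ _ _ => Or.inl (Subsingleton.elim x z).le

theorem sum (hr₁ : Realizable a₁ h₁ n₁) (hr₂ : Realizable a₂ h₂ n₂) :
    Realizable (a₁ + a₂) (max h₁ h₂) (n₁ + n₂) := by
  obtain ⟨α, _, _, hVα, rfl, hhα, rfl⟩ := hr₁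
  obtain ⟨β, _, _, hVβ, rfl, hhβ, rfl⟩ := hr₂
  exact ⟨α ⊕ β, inferInstance, inferInstance, hVα.sum hVβ, ao_sum,
    heightP_sum_le.trans (max_le_max hhα hhβ), Fintype.card_sum⟩

theorem withTop (hr : Realizable a h n) (hha : h < a) : Realizable a (h + 1) (n + 1) := by
  obtain ⟨α, _, _, hV, rfl, hh, rfl⟩ := hr
  have hht : heightP (WithTop α) ≤ h + 1 := heightP_withTop_le.trans (by omega)
  refine ⟨WithTop α, inferInstance, inferInstance, hV.withTop,
    le_antisymm ?_ (ao_le_of_orderEmbedding WithTop.coeOrderHom), hht, Fintype.card_option⟩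
  exact ao_withTop_le.trans (max_le le_rfl (by omega))

theorem add_tops (hr : Realizable a h n) : ∀ k, h + k ≤ a → Realizable a (h + k) (n + k)
  | 0, _ => hr
  | k + 1, hk => (hr.add_tops k (by omega)).withTop (by omega)

theorem exists_partialOrder (hr : Realizable a h n) (γ : Type*) [Fintype γ]
    (hγ : Fintype.card γ = n) :
    ∃ P : PartialOrder γ, @VFree γ P ∧ @ao γ _ P = a ∧ @heightP γ _ P ≤ h := by
  obtain ⟨α, _, _, hV, rfl, hh, rfl⟩ := hr
  let e : γ ≃ α := Fintype.equivOfCardEq hγ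
  let _ : PartialOrder γ := e.partialOrder
  let f : γ ≃o α := ⟨e, Iff.rfl⟩
  exact ⟨inferInstance, hV.comap f.toOrderEmbedding,
    le_antisymm (ao_le_of_orderEmbedding f.toOrderEmbedding)
      (ao_le_of_orderEmbedding f.symm.toOrderEmbedding),
    (heightP_le_of_orderEmbedding f.toOrderEmbedding).trans hh⟩

end Realizable

theorem realizable_lambdaRec : (a : ℕ) → Realizable a a (lambdaRec a)
  | 0 => by rw [lambdaRec]; exact Realizable.zero
  | 1 => by rw [lambdaRec]; exact Realizable.one
  | n + 2 => by
    have h := ((realizable_lambdaRec ((n + 3) / 2)).sum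
      (realizable_lambdaRec ((n + 2) / 2))).add_tops ((n + 2) / 2) (by omega)
    rwa [show (n + 3) / 2 + (n + 2) / 2 = n + 2 by omega,
      show max ((n + 3) / 2) ((n + 2) / 2) + (n + 2) / 2 = n + 2 by omega, ← lambdaRec] at h

theorem Lambda_eq_lambdaRec (a : ℕ) : Lambda a = lambdaRec a := by
  refine IsGreatest.csSup_eq
    ⟨(realizable_lambdaRec a).exists_partialOrder (Fin _) (Fintype.card_fin _), ?_⟩
  rintro n ⟨P, hV, hao, -⟩
  simpa [hao] using @VFree.card_le_lambdaRec_ao (Fin n) P (Fin.fintype n) hV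

theorem Lambda_half_general (a : ℕ) :
    Lambda a = Lambda ((a + 1) / 2) + Lambda (a / 2) + a / 2 := by
  simp only [Lambda_eq_lambdaRec]
  exact lambdaRec_half a

/-- for `a ≥ 2`, `Λ(a) = Λ(⌈a/2⌉) + Λ(⌊a/2⌋) + ⌊a/2⌋`. -/
theorem Lambda_half (a : ℕ) (ha : 2 ≤ a) :
    Lambda a = Lambda ((a + 1) / 2) + Lambda (a / 2) + a / 2 :=
  Lambda_half_general a
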